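/- arXiv:0803.4332 — 2 statements merged into one kernel-verified Lean document; each statement's English description precedes it below -/
import Mathlib

section
/- Let {X_n} be a stationary ergodic binary process. Define λ_0 = 1 and recursively τ_k = min{t > 0 : X_{-λ_{k-1}-t}^{-1-t} = X_{-λ_{k-1}}^{-1}} and λ_k = τ_k + λ_{k-1}. Then for every k ≥ 1, the conditional distribution identity P(X_{-τ_k} = 1 | X_{-λ_{k-1}}^{-1}) = P(X_0 = 1 | X_{-λ_{k-1}}^{-1}) holds almost surely. -/
open MeasureTheory Filter

noncomputable section

instance : MeasurableSpace (Option Bool) := ⊤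

/-- Sample space of two-sided binary sequences. -/
abbrev Om : Type := ℤ → Bool

/-- The left shift. -/
def shift : Om → Om := fun ω n => ω (n + 1)

/-- The random lengths `λ_k`: `λ_0 = 1`, `λ_k = λ_{k-1} + τ_k` where `τ_k` is the
backward return time of the pattern `X_{-λ_{k-1}}^{-1}`. -/
def lam (ω : Om) : ℕ → ℕ
  | 0 => 1
  | k + 1 => lam ω k +
      sInf {t : ℕ | 0 < t ∧ ∀ i : ℕ, i < lam ω k → ω (-1 - (t : ℤ) - (i : ℤ)) = ω (-1 - (i : ℤ))}

/-- The return times `τ_k` (`k ≥ 1`). -/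
def tauk (ω : Om) (k : ℕ) : ℕ :=
  sInf {t : ℕ | 0 < t ∧ ∀ i : ℕ, i < lam ω (k - 1) → ω (-1 - (t : ℤ) - (i : ℤ)) = ω (-1 - (i : ℤ))}

/-- The (random-length) observed pattern `X_{-λ_k}^{-1}`, encoded so that the σ-algebra it
generates records both the length `λ_k` and the pattern values. -/
def blockMap (k : ℕ) (ω : Om) : ℕ → Option Bool :=
  fun i => if i < lam ω k then some (ω (-1 - (i : ℤ))) else none

/-!
Fix `K = k - 1`, write `τ` for `τ_{K+1}` and `R` for the forward return time of the same block
`X_{-λ_K}^{-1}`. As long as the earlier patterns do recur (almost surely, by Poincaré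
recurrence for the shift and its inverse), the block, `λ_K` included, is determined by the
coordinates it occupies. Hence, for `t > 0`, `R(ω) = t` holds exactly when the sequence shifted
by `t` has `τ = t`, both then show the same block, and the coordinate `X_{-t}` of the shifted
sequence is `X_0` of `ω`. Cutting `{block ∈ S, X_{-τ} = 1}` according to the value of `τ`,
shift invariance moves the `t`-th piece onto the `t`-th piece of `{block ∈ S, X_0 = 1}` cut
according to `R`.
-/

theorem Nat.sInf_eq_iff_isLeast {s : Set ℕ} {n : ℕ} (hn : 0 < n) : sInf s = n ↔ IsLeast s n :=
  ⟨fun h => h ▸ isLeast_csInf (Nat.nonempty_of_pos_sInf (h ▸ hn)), IsLeast.csInf_eq⟩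

theorem measurable_sInf_setOf {α : Type*} [MeasurableSpace α] {p : ℕ → α → Prop}
    (hp : ∀ t, Measurable (p t)) : Measurable fun a => sInf {t | p t a} := by
  refine measurable_to_countable' fun n => ?_
  rcases n.eq_zero_or_pos with rfl | hn
  · have : (fun a => sInf {t | p t a}) ⁻¹' {0} = {a | p 0 a ∨ ∀ t, ¬ p t a} := by
      ext a
      simp [Nat.sInf_eq_zero, Set.eq_empty_iff_forall_notMem]
    rw [this]
    exact measurableSet_setOfPred.2 ((hp 0).or (Measurable.forall fun t => (hp t).not))
  · have : (fun a => sInf {t | p t a}) ⁻¹' {n} = {a | p n a ∧ ∀ t, p t a → n ≤ t} := by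
      ext a
      simp only [Set.mem_preimage, Set.mem_singleton_iff, Nat.sInf_eq_iff_isLeast hn]
      rfl
    rw [this]
    exact measurableSet_setOfPred.2 ((hp n).and (Measurable.forall fun t =>
      (hp t).imp measurable_const))

theorem MeasureTheory.Conservative.ae_frequently_apply_iterate_eq {α β : Type*}
    [MeasurableSpace α] [MeasurableSpace β] [Countable β] [MeasurableSingletonClass β]
    {μ : Measure α} {T : α → α} (hT : Conservative T μ) {f : α → β} (hf : Measurable f) :
    ∀ᵐ x ∂μ, ∃ᶠ n in atTop, f (T^[n] x) = f x := by
  have := ae_all_iff.2 fun b : β =>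
    hT.ae_mem_imp_frequently_image_mem (hf (measurableSet_singleton b)).nullMeasurableSet
  filter_upwards [this] with x hx using hx (f x) rfl

theorem MeasureTheory.measure_eq_tsum_inter_preimage_singleton {α : Type*} [MeasurableSpace α]
    {μ : Measure α} {f : α → ℕ} (hf : Measurable f) {A : Set α} (hA : MeasurableSet A) :
    μ A = ∑' t, μ (A ∩ f ⁻¹' {t}) := by
  conv_lhs => rw [← Set.inter_univ A, ← Set.preimage_univ (f := f), ← Set.iUnion_of_singleton ℕ,
    Set.preimage_iUnion, Set.inter_iUnion]
  refine measure_iUnion (fun s t hst => ?_) fun t => hA.inter (hf (measurableSet_singleton t))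
  exact ((Set.disjoint_singleton.2 hst).preimage f).mono Set.inter_subset_right
    Set.inter_subset_right

def shiftInv : Om → Om := fun ω n => ω (n - 1)

theorem iterate_shift_apply (t : ℕ) (ω : Om) (n : ℤ) : shift^[t] ω n = ω (n + t) := by
  induction t generalizing n with
  | zero => simp
  | succ t ih =>
    rw [Function.iterate_succ_apply', shift, ih]
    push_cast
    ring_nf

theorem iterate_shiftInv_apply (t : ℕ) (ω : Om) (n : ℤ) : shiftInv^[t] ω n = ω (n - t) := by
  induction t generalizing n with
  | zero => simp
  | succ t ih =>
    rw [Function.iterate_succ_apply', shiftInv, ih]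
    push_cast
    ring_nf

theorem leftInverse_shiftInv_shift : Function.LeftInverse shiftInv shift := by
  intro ω
  funext n
  simp [shiftInv, shift]

theorem measurable_shift : Measurable shift :=
  measurable_pi_lambda _ fun n => measurable_pi_apply (n + 1)

theorem measurable_shiftInv : Measurable shiftInv :=
  measurable_pi_lambda _ fun n => measurable_pi_apply (n - 1)

theorem MeasureTheory.MeasurePreserving.shiftInv {μ : Measure Om}
    (hstat : MeasurePreserving shift μ μ) : MeasurePreserving shiftInv μ μ := by
  refine ⟨measurable_shiftInv, ?_⟩
  conv_lhs => rw [← hstat.map_eq]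
  rw [Measure.map_map measurable_shiftInv measurable_shift, leftInverse_shiftInv_shift.comp_eq_id,
    Measure.map_id]

def PastEq (L : ℕ) (ω ω' : Om) : Prop :=
  ∀ i : ℕ, i < L → ω (-1 - (i : ℤ)) = ω' (-1 - (i : ℤ))

theorem PastEq.mono {L L' : ℕ} {ω ω' : Om} (h : PastEq L ω ω') (hL : L' ≤ L) : PastEq L' ω ω' :=
  fun i hi => h i (hi.trans_le hL)

theorem PastEq.symm {L : ℕ} {ω ω' : Om} (h : PastEq L ω ω') : PastEq L ω' ω :=
  fun i hi => (h i hi).symm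

/-- Times `t > 0` at which the pattern `X_{-L}^{-1}` reappears as `X_{-L-t}^{-1-t}`. -/
def backReturns (ω : Om) (L : ℕ) : Set ℕ :=
  {t | 0 < t ∧ ∀ i : ℕ, i < L → ω (-1 - (t : ℤ) - (i : ℤ)) = ω (-1 - (i : ℤ))}

/-- Times `t > 0` at which the pattern `X_{-L}^{-1}` reappears as `X_{-L+t}^{-1+t}`. -/
def fwdReturns (ω : Om) (L : ℕ) : Set ℕ :=
  {t | 0 < t ∧ PastEq L (shift^[t] ω) ω}

/-- `τ_{K+1}`; it is `0` when the pattern never recurs. -/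
def backReturnTime (K : ℕ) (ω : Om) : ℕ := sInf (backReturns ω (lam ω K))

def fwdReturnTime (K : ℕ) (ω : Om) : ℕ := sInf (fwdReturns ω (lam ω K))

theorem lam_succ (ω : Om) (K : ℕ) : lam ω (K + 1) = lam ω K + backReturnTime K ω := rfl

theorem tauk_eq_backReturnTime (ω : Om) (k : ℕ) : tauk ω k = backReturnTime (k - 1) ω := rfl

theorem mem_backReturns_iff {ω : Om} {L t : ℕ} :
    t ∈ backReturns ω L ↔ 0 < t ∧ PastEq L (shiftInv^[t] ω) ω := by
  simp only [backReturns, PastEq, Set.mem_ofPred_eq, iterate_shiftInv_apply, sub_right_comm]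

theorem mem_backReturns_iterate_shift_iff {ω : Om} {L t : ℕ} :
    t ∈ backReturns (shift^[t] ω) L ↔ t ∈ fwdReturns ω L := by
  have h (i : ℤ) : -1 - (t : ℤ) - i + t = -1 - i := by ring
  simp only [backReturns, fwdReturns, PastEq, Set.mem_ofPred_eq, iterate_shift_apply, h, eq_comm]

def HasBackReturns (K : ℕ) (ω : Om) : Prop := ∀ j < K, (backReturns ω (lam ω j)).Nonempty

theorem hasBackReturns_succ {K : ℕ} {ω : Om} :
    HasBackReturns (K + 1) ω ↔ HasBackReturns K ω ∧ (backReturns ω (lam ω K)).Nonempty :=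
  ⟨fun h => ⟨fun j hj => h j (by omega), h K (by omega)⟩,
    fun ⟨h, hK⟩ j hj => (Nat.lt_succ_iff_lt_or_eq.1 hj).elim (h j) fun e => e ▸ hK⟩

theorem mem_backReturns_congr {ω ω' : Om} {L t : ℕ} (h : PastEq (t + L) ω ω') :
    t ∈ backReturns ω L ↔ t ∈ backReturns ω' L := by
  refine and_congr_right fun _ => forall₂_congr fun i hi => ?_
  have e : -1 - (t : ℤ) - i = -1 - ((t + i : ℕ) : ℤ) := by push_cast; ring
  rw [e, h i (by omega), h (t + i) (by omega)]

theorem IsLeast.backReturns_of_pastEq {ω ω' : Om} {L τ : ℕ} (hτ : IsLeast (backReturns ω L) τ)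
    (h : PastEq (τ + L) ω ω') : IsLeast (backReturns ω' L) τ := by
  have key : ∀ t ≤ τ, t ∈ backReturns ω L ↔ t ∈ backReturns ω' L :=
    fun t ht => mem_backReturns_congr (h.mono (by omega))
  exact ⟨(key τ le_rfl).1 hτ.1,
    fun t ht => le_of_not_gt fun hlt => hlt.not_ge (hτ.2 ((key t hlt.le).2 ht))⟩

theorem lam_eq_of_pastEq {K : ℕ} {ω ω' : Om} (hg : HasBackReturns K ω)
    (h : PastEq (lam ω K) ω ω') : HasBackReturns K ω' ∧ lam ω' K = lam ω K := by
  induction K with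
  | zero => exact ⟨fun j hj => absurd hj (Nat.not_lt_zero j), rfl⟩
  | succ K ih =>
    obtain ⟨hg, hne⟩ := hasBackReturns_succ.1 hg
    obtain ⟨hg', hlam⟩ := ih hg (h.mono (by rw [lam_succ]; omega))
    have hτ : IsLeast (backReturns ω' (lam ω' K)) (backReturnTime K ω) :=
      hlam ▸ (isLeast_csInf hne).backReturns_of_pastEq (h.mono (by rw [lam_succ, add_comm]; rfl))
    refine ⟨hasBackReturns_succ.2 ⟨hg', hτ.nonempty⟩, ?_⟩
    rw [lam_succ, lam_succ, hlam, backReturnTime, hτ.csInf_eq]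

theorem blockMap_eq_of_pastEq {K : ℕ} {ω ω' : Om} (hlam : lam ω' K = lam ω K)
    (h : PastEq (lam ω K) ω' ω) : blockMap K ω' = blockMap K ω := by
  funext i
  simp only [blockMap, hlam]
  split_ifs with hi
  · rw [h i hi]
  · rfl

theorem mem_backReturns_iterate_shift_iff_of_lt {ω : Om} {L s t : ℕ} (htF : t ∈ fwdReturns ω L)
    (hs : 0 < s) (hst : s < t) :
    s ∈ backReturns (shift^[t] ω) L ↔ t - s ∈ fwdReturns ω L := by
  have hF := htF.2
  simp only [backReturns, fwdReturns, PastEq, Set.mem_ofPred_eq, iterate_shift_apply] at hF ⊢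
  refine and_congr (iff_of_true hs (by omega)) (forall₂_congr fun i hi => ?_)
  have e : -1 - (s : ℤ) - i + t = -1 - i + ((t - s : ℕ) : ℤ) := by push_cast [hst.le]; ring
  rw [hF i hi, e]

theorem isLeast_backReturns_iterate_shift_iff {ω : Om} {L t : ℕ} :
    IsLeast (backReturns (shift^[t] ω) L) t ↔ IsLeast (fwdReturns ω L) t := by
  constructor
  · rintro ⟨htB, hmin⟩
    have htF := mem_backReturns_iterate_shift_iff.1 htB
    refine ⟨htF, fun s hs => le_of_not_gt fun hst => ?_⟩
    have hs₀ := hs.1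
    have hB : t - s ∈ backReturns (shift^[t] ω) L :=
      (mem_backReturns_iterate_shift_iff_of_lt htF (by omega) (by omega)).2
        (by rwa [Nat.sub_sub_self hst.le])
    have := hmin hB
    omega
  · rintro ⟨htF, hmin⟩
    refine ⟨mem_backReturns_iterate_shift_iff.2 htF, fun s hs => le_of_not_gt fun hst => ?_⟩
    have := hmin ((mem_backReturns_iterate_shift_iff_of_lt htF hs.1 hst).1 hs)
    have := hs.1
    omega

theorem iterate_shift_backReturnTime_eq_iff {K t : ℕ} (ht : 0 < t) (ω : Om) :
    HasBackReturns K (shift^[t] ω) ∧ backReturnTime K (shift^[t] ω) = t ↔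
      HasBackReturns K ω ∧ fwdReturnTime K ω = t := by
  simp only [backReturnTime, fwdReturnTime, Nat.sInf_eq_iff_isLeast ht]
  constructor
  · rintro ⟨hg, hτ⟩
    obtain ⟨hg', hlam⟩ := lam_eq_of_pastEq hg (mem_backReturns_iterate_shift_iff.1 hτ.1).2
    exact ⟨hg', hlam ▸ isLeast_backReturns_iterate_shift_iff.1 hτ⟩
  · rintro ⟨hg, hR⟩
    obtain ⟨hg', hlam⟩ := lam_eq_of_pastEq hg hR.1.2.symm
    exact ⟨hg', hlam ▸ isLeast_backReturns_iterate_shift_iff.2 hR⟩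

theorem blockMap_iterate_shift {K t : ℕ} {ω : Om} (ht : 0 < t) (hg : HasBackReturns K ω)
    (hR : fwdReturnTime K ω = t) : blockMap K (shift^[t] ω) = blockMap K ω := by
  have hpast : PastEq (lam ω K) (shift^[t] ω) ω := ((Nat.sInf_eq_iff_isLeast ht).1 hR).1.2
  exact blockMap_eq_of_pastEq (lam_eq_of_pastEq hg hpast.symm).2 hpast

theorem MeasureTheory.Conservative.ae_forall_exists_pastEq_iterate {μ : Measure Om} {T : Om → Om}
    (hT : Conservative T μ) : ∀ᵐ ω ∂μ, ∀ L, ∃ t, 0 < t ∧ PastEq L (T^[t] ω) ω := by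
  refine ae_all_iff.2 fun L => ?_
  have hf : Measurable fun (ω : Om) (i : Fin L) => ω (-1 - ((i : ℕ) : ℤ)) :=
    measurable_pi_lambda _ fun _ => measurable_pi_apply _
  filter_upwards [hT.ae_frequently_apply_iterate_eq hf] with ω hω
  obtain ⟨t, heq, ht⟩ := (hω.and_eventually (eventually_gt_atTop 0)).exists
  exact ⟨t, ht, fun i hi => congr_fun heq ⟨i, hi⟩⟩

theorem ae_backReturns_nonempty {μ : Measure Om} [IsFiniteMeasure μ]
    (hstat : MeasurePreserving shift μ μ) : ∀ᵐ ω ∂μ, ∀ L, (backReturns ω L).Nonempty := by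
  filter_upwards [hstat.shiftInv.conservative.ae_forall_exists_pastEq_iterate] with ω h L
  obtain ⟨t, ht, hpast⟩ := h L
  exact ⟨t, mem_backReturns_iff.2 ⟨ht, hpast⟩⟩

theorem ae_fwdReturns_nonempty {μ : Measure Om} [IsFiniteMeasure μ]
    (hstat : MeasurePreserving shift μ μ) : ∀ᵐ ω ∂μ, ∀ L, (fwdReturns ω L).Nonempty := by
  filter_upwards [hstat.conservative.ae_forall_exists_pastEq_iterate] with ω h L
  obtain ⟨t, ht, hpast⟩ := h L
  exact ⟨t, ht, hpast⟩

theorem measurable_pastEq {f : Om → ℕ} (hf : Measurable f) {g h : Om → Om} (hg : Measurable g)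
    (hh : Measurable h) : Measurable fun ω => PastEq (f ω) (g ω) (h ω) :=
  Measurable.forall fun _ => (measurable_const.lt hf).imp
    (((measurable_pi_apply _).comp hg).eq ((measurable_pi_apply _).comp hh))

theorem measurable_mem_backReturns {f : Om → ℕ} (hf : Measurable f) (t : ℕ) :
    Measurable fun ω => t ∈ backReturns ω (f ω) := by
  simp only [mem_backReturns_iff]
  exact measurable_const.and (measurable_pastEq hf (measurable_shiftInv.iterate t) measurable_id)

theorem measurable_mem_fwdReturns {f : Om → ℕ} (hf : Measurable f) (t : ℕ) :
    Measurable fun ω => t ∈ fwdReturns ω (f ω) :=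
  measurable_const.and (measurable_pastEq hf (measurable_shift.iterate t) measurable_id)

theorem measurable_lam (j : ℕ) : Measurable fun ω => lam ω j := by
  induction j with
  | zero => exact measurable_const
  | succ j ih => exact ih.add (measurable_sInf_setOf fun t => measurable_mem_backReturns ih t)

theorem measurable_backReturnTime (K : ℕ) : Measurable (backReturnTime K) :=
  measurable_sInf_setOf fun t => measurable_mem_backReturns (measurable_lam K) t

theorem measurable_fwdReturnTime (K : ℕ) : Measurable (fwdReturnTime K) :=
  measurable_sInf_setOf fun t => measurable_mem_fwdReturns (measurable_lam K) t

theorem measurable_hasBackReturns (K : ℕ) : Measurable (HasBackReturns K) :=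
  Measurable.forall fun j => measurable_const.imp
    (Measurable.exists fun t => measurable_mem_backReturns (measurable_lam j) t)

theorem measurable_blockMap (K : ℕ) : Measurable (blockMap K) :=
  measurable_pi_lambda _ fun _ =>
    Measurable.ite (measurableSet_lt measurable_const (measurable_lam K))
      (measurable_from_top.comp (measurable_pi_apply _)) measurable_const

theorem measurable_iterate_shiftInv_backReturnTime (K : ℕ) :
    Measurable fun ω => shiftInv^[backReturnTime K ω] ω :=
  (measurable_from_prod_countable_left (f := fun p : Om × ℕ => shiftInv^[p.2] p.1)
    fun n => measurable_shiftInv.iterate n).comp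
    (measurable_id.prodMk (measurable_backReturnTime K))

theorem ae_hasBackReturns {μ : Measure Om} [IsFiniteMeasure μ]
    (hstat : MeasurePreserving shift μ μ) (K : ℕ) : ∀ᵐ ω ∂μ, HasBackReturns K ω := by
  filter_upwards [ae_backReturns_nonempty hstat] with ω h j _ using h _

theorem measure_backReturnTime_eq_zero {μ : Measure Om} [IsFiniteMeasure μ]
    (hstat : MeasurePreserving shift μ μ) (K : ℕ) : μ (backReturnTime K ⁻¹' {0}) = 0 :=
  measure_mono_null
    (fun ω (hω : backReturnTime K ω = 0) (h : ∀ L, (backReturns ω L).Nonempty) =>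
      (Nat.sInf_mem (h _)).1.ne' hω) (ae_iff.1 (ae_backReturns_nonempty hstat))

theorem measure_fwdReturnTime_eq_zero {μ : Measure Om} [IsFiniteMeasure μ]
    (hstat : MeasurePreserving shift μ μ) (K : ℕ) : μ (fwdReturnTime K ⁻¹' {0}) = 0 :=
  measure_mono_null
    (fun ω (hω : fwdReturnTime K ω = 0) (h : ∀ L, (fwdReturns ω L).Nonempty) =>
      (Nat.sInf_mem (h _)).1.ne' hω) (ae_iff.1 (ae_fwdReturns_nonempty hstat))

theorem preimage_iterate_shift_inter_backReturnTime_eq {K t : ℕ} (ht : 0 < t)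
    (S : Set (ℕ → Option Bool)) (B : Set Om) :
    shift^[t] ⁻¹' (blockMap K ⁻¹' S ∩ {ω | shiftInv^[backReturnTime K ω] ω ∈ B} ∩
        {ω | HasBackReturns K ω} ∩ backReturnTime K ⁻¹' {t}) =
      blockMap K ⁻¹' S ∩ B ∩ {ω | HasBackReturns K ω} ∩ fwdReturnTime K ⁻¹' {t} := by
  ext ω
  have hinv : shiftInv^[t] (shift^[t] ω) = ω := (leftInverse_shiftInv_shift.iterate t) ω
  simp only [Set.mem_preimage, Set.mem_inter_iff, Set.mem_singleton_iff, Set.mem_ofPred_eq]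
  constructor
  · rintro ⟨⟨⟨hS, hB⟩, hg'⟩, hτ⟩
    obtain ⟨hg, hR⟩ := (iterate_shift_backReturnTime_eq_iff ht ω).1 ⟨hg', hτ⟩
    rw [hτ, hinv] at hB
    rw [blockMap_iterate_shift ht hg hR] at hS
    exact ⟨⟨⟨hS, hB⟩, hg⟩, hR⟩
  · rintro ⟨⟨⟨hS, hB⟩, hg⟩, hR⟩
    obtain ⟨hg', hτ⟩ := (iterate_shift_backReturnTime_eq_iff ht ω).2 ⟨hg, hR⟩
    rw [← blockMap_iterate_shift ht hg hR] at hS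
    exact ⟨⟨⟨hS, by rwa [hτ, hinv]⟩, hg'⟩, hτ⟩

theorem measure_inter_iterate_shiftInv_backReturnTime {μ : Measure Om} [IsFiniteMeasure μ]
    (hstat : MeasurePreserving shift μ μ) (K : ℕ) {S : Set (ℕ → Option Bool)}
    (hS : MeasurableSet S) {B : Set Om} (hB : MeasurableSet B) :
    μ (blockMap K ⁻¹' S ∩ {ω | shiftInv^[backReturnTime K ω] ω ∈ B}) =
      μ (blockMap K ⁻¹' S ∩ B) := by
  set s := blockMap K ⁻¹' S
  set U := {ω | shiftInv^[backReturnTime K ω] ω ∈ B}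
  set G := {ω | HasBackReturns K ω}
  have hs : MeasurableSet s := measurable_blockMap K hS
  have hU : MeasurableSet U := measurable_iterate_shiftInv_backReturnTime K hB
  have hG : MeasurableSet G := (measurable_hasBackReturns K).setOf
  have hGc : μ Gᶜ = 0 := ae_iff.1 (ae_hasBackReturns hstat K)
  have hpiece (t : ℕ) : μ (s ∩ U ∩ G ∩ backReturnTime K ⁻¹' {t}) =
      μ (s ∩ B ∩ G ∩ fwdReturnTime K ⁻¹' {t}) := by
    rcases t.eq_zero_or_pos with rfl | ht
    · rw [measure_mono_null Set.inter_subset_right (measure_backReturnTime_eq_zero hstat K),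
        measure_mono_null Set.inter_subset_right (measure_fwdReturnTime_eq_zero hstat K)]
    rw [← preimage_iterate_shift_inter_backReturnTime_eq ht, (hstat.iterate t).measure_preimage
      (((hs.inter hU).inter hG).inter
        (measurable_backReturnTime K (measurableSet_singleton t))).nullMeasurableSet]
  calc μ (s ∩ U) = μ (s ∩ U ∩ G) := (measure_inter_conull hGc).symm
    _ = ∑' t, μ (s ∩ U ∩ G ∩ backReturnTime K ⁻¹' {t}) :=
      measure_eq_tsum_inter_preimage_singleton (measurable_backReturnTime K)
        ((hs.inter hU).inter hG)
    _ = ∑' t, μ (s ∩ B ∩ G ∩ fwdReturnTime K ⁻¹' {t}) := tsum_congr hpiece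
    _ = μ (s ∩ B ∩ G) := (measure_eq_tsum_inter_preimage_singleton
      (measurable_fwdReturnTime K) ((hs.inter hB).inter hG)).symm
    _ = μ (s ∩ B) := measure_inter_conull hGc

theorem condExp_indicator_ae_eq_of_forall_measure_inter_eq {Ω : Type*} {m m₀ : MeasurableSpace Ω}
    {μ : Measure Ω} [IsFiniteMeasure μ] (hm : m ≤ m₀) {U V : Set Ω} (hU : MeasurableSet U)
    (hV : MeasurableSet V) (h : ∀ s, MeasurableSet[m] s → μ (s ∩ U) = μ (s ∩ V)) :
    μ[U.indicator (1 : Ω → ℝ)|m] =ᵐ[μ] μ[V.indicator (1 : Ω → ℝ)|m] := by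
  refine ae_eq_condExp_of_forall_setIntegral_eq hm ((integrable_const 1).indicator hV)
    (fun s _ _ => integrable_condExp.integrableOn) (fun s hs _ => ?_)
    stronglyMeasurable_condExp.aestronglyMeasurable
  rw [setIntegral_condExp hm ((integrable_const 1).indicator hU) hs,
    integral_indicator_one hU, integral_indicator_one hV, measureReal_restrict_apply hU,
    measureReal_restrict_apply hV, measureReal_def, measureReal_def, Set.inter_comm U,
    Set.inter_comm V, h s hs]

theorem stmt0_general (μ : Measure Om) [IsProbabilityMeasure μ]
    (hstat : MeasurePreserving shift μ μ)
    (k : ℕ) :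
    μ[(fun ω => if ω (-(tauk ω k : ℤ)) = true then (1 : ℝ) else 0) |
        MeasurableSpace.comap (blockMap (k - 1)) inferInstance]
      =ᵐ[μ]
    μ[(fun ω => if ω 0 = true then (1 : ℝ) else 0) |
        MeasurableSpace.comap (blockMap (k - 1)) inferInstance] := by
  have hB : MeasurableSet {ω : Om | ω 0 = true} :=
    measurableSet_eq_fun (measurable_pi_apply _) measurable_const
  have hτ : (fun ω => if ω (-(tauk ω k : ℤ)) = true then (1 : ℝ) else 0) =
      {ω | shiftInv^[backReturnTime (k - 1) ω] ω ∈ {ω' : Om | ω' 0 = true}}.indicator 1 := by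
    funext ω
    simp only [Set.indicator_apply, Set.mem_ofPred_eq, iterate_shiftInv_apply, zero_sub,
      tauk_eq_backReturnTime, Pi.one_apply]
    congr
  have h₀ : (fun ω => if ω 0 = true then (1 : ℝ) else 0) = {ω : Om | ω 0 = true}.indicator 1 := by
    funext ω
    simp [Set.indicator_apply]
  rw [hτ, h₀]
  refine condExp_indicator_ae_eq_of_forall_measure_inter_eq (measurable_blockMap _).comap_le
    (measurable_iterate_shiftInv_backReturnTime _ hB) hB ?_
  rintro _ ⟨S, hS, rfl⟩
  exact measure_inter_iterate_shiftInv_backReturnTime hstat (k - 1) hS hB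

/-- for a stationary ergodic binary process, for each `k ≥ 1`,
`P(X_{-τ_k} = 1 | X_{-λ_{k-1}}^{-1}) = P(X_0 = 1 | X_{-λ_{k-1}}^{-1})` almost surely. -/
theorem stmt0 (μ : Measure Om) [IsProbabilityMeasure μ]
    (hstat : MeasurePreserving shift μ μ) (herg : Ergodic shift μ)
    (k : ℕ) (hk : 1 ≤ k) :
    μ[(fun ω => if ω (-(tauk ω k : ℤ)) = true then (1 : ℝ) else 0) |
        MeasurableSpace.comap (blockMap (k - 1)) inferInstance]
      =ᵐ[μ]
    μ[(fun ω => if ω 0 = true then (1 : ℝ) else 0) |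
        MeasurableSpace.comap (blockMap (k - 1)) inferInstance] :=
  stmt0_general μ hstat k

end
end

section
/- Let {M_n} be a stationary ergodic first-order Markov chain with countable state space S, let s ∈ S with P(M_1 = s) > 0, and set X_n = 1_{{M_n = s}}. Then the binary process {X_n} is stationary, ergodic, and finitarily Markovian: almost surely there exists a finite K such that for all i ≥ 1, y ∈ {0,1}, and z_{-K-i+1}^{-K}, one has P(X_1 = y | X_{-K+1}^0) = P(X_1 = y | z_{-K-i+1}^{-K}, X_{-K+1}^0) whenever the conditioning event has positive probability. -/
open MeasureTheory Filter

noncomputable section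

/-- The left shift on two-sided sequences. -/
def shiftA {A : Type} : (ℤ → A) → (ℤ → A) := fun ω n => ω (n + 1)

section Words

variable {A : Type} [DecidableEq A] [Inhabited A] [MeasurableSpace A]

/-- The word `w` occurs in `ω` ending at position `t`, i.e. `X_{t-|w|+1}^t = w`. -/
def occursAt (ω : ℤ → A) (t : ℤ) (w : List A) : Prop :=
  ∀ i ∈ Finset.range w.length, ω (t - (i : ℤ)) = w.reverse.getD i default

/-- The probability `p(w)` of observing the word `w` as `X_{-|w|+1}^0`. -/
noncomputable def wordProb (μ : MeasureTheory.Measure (ℤ → A)) (w : List A) : ℝ :=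
  (μ {ω | occursAt ω 0 w}).toReal

/-- The conditional probability `p(y | w) = p(wy)/p(w)`. -/
noncomputable def condProb (μ : MeasureTheory.Measure (ℤ → A)) (y : A) (w : List A) : ℝ :=
  wordProb μ (w ++ [y]) / wordProb μ w

/-- `w` is a memory word: extending the conditioning word `w` into the past does not
change the conditional distribution of the next symbol. -/
def IsMemoryWord (μ : MeasureTheory.Measure (ℤ → A)) (w : List A) : Prop :=
  ∀ (z : List A) (y : A), z ≠ [] → 0 < wordProb μ (z ++ w ++ [y]) →
    condProb μ y w = condProb μ y (z ++ w)

/-- The word `X_{t-k+1}^t` observed in `ω`. -/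
def pastWord (ω : ℤ → A) (t : ℤ) (k : ℕ) : List A :=
  ((List.range k).map (fun i => ω (t - (i : ℤ)))).reverse

/-- The memory length `K(X_{-∞}^t)`: the smallest `k` such that `X_{t-k+1}^t` is a
memory word. -/
noncomputable def memLenAt (μ : MeasureTheory.Measure (ℤ → A)) (ω : ℤ → A) (t : ℤ) : ℕ :=
  sInf {k : ℕ | IsMemoryWord μ (pastWord ω t k)}

/-- The number of occurrences of the word `w` ending at a position `t ∈ [a, b]`. -/
noncomputable def countOcc (ω : ℤ → A) (a b : ℤ) (w : List A) : ℕ :=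
  letI : DecidablePred (fun t : ℤ => occursAt ω t w) := fun _ => Classical.dec _
  ((Finset.Icc a b).filter (fun t => occursAt ω t w)).card

end Words

/-!
At every visit of the chain to `s₀` the indicator process is `1`, and the Markov property makes
the future of the chain conditionally independent of its past given that visit. Hence, once the
observed window contains a `1`, extending it further into the past does not change the conditional
law of the next symbol: both `p(z w y)` and `p(z w)` factor as a constant times the probability of
the part of `z w` up to that `1`, and the ratio does not depend on `z`. By ergodicity the process
almost surely has a `1` somewhere in its past, so the memory length is almost surely finite.
Stationarity and ergodicity pass to the factor `ω ↦ (1_{ω n = s₀})ₙ`.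
-/

open scoped ENNReal

section Words

variable {A : Type} [Inhabited A]

lemma occursAt_nil (x : ℤ → A) (t : ℤ) : occursAt x t [] := by
  simp [occursAt]

lemma occursAt_singleton {x : ℤ → A} {t : ℤ} {a : A} : occursAt x t [a] ↔ x t = a := by
  simp [occursAt]

lemma occursAt_append {x : ℤ → A} {t t' : ℤ} {v w : List A} (h : t' + w.length = t) :
    occursAt x t (v ++ w) ↔ occursAt x t w ∧ occursAt x t' v := by
  simp only [occursAt, Finset.mem_range, List.length_append, List.reverse_append]
  constructor
  · intro hx
    refine ⟨fun i hi => ?_, fun i hi => ?_⟩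
    · rw [hx i (by omega), List.getD_append _ _ _ _ (by simpa using hi)]
    · have := hx (i + w.length) (by omega)
      rw [List.getD_append_right _ _ _ _ (by simp), List.length_reverse,
        Nat.add_sub_cancel] at this
      rw [← this]; congr 1; push_cast; omega
  · rintro ⟨hw, hv⟩ i hi
    by_cases hiw : i < w.length
    · rw [hw i hiw, List.getD_append _ _ _ _ (by simpa using hiw)]
    · rw [List.getD_append_right _ _ _ _ (by simp; omega), List.length_reverse,
        ← hv (i - w.length) (by omega)]
      congr 1; push_cast [Nat.cast_sub (not_lt.1 hiw)]; omega

lemma occursAt_shiftA {x : ℤ → A} {t : ℤ} {v : List A} :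
    occursAt (shiftA x) t v ↔ occursAt x (t + 1) v := by
  simp only [occursAt, shiftA, sub_add_eq_add_sub]

lemma measurableSet_occursAt [MeasurableSpace A] [MeasurableSingletonClass A] (t : ℤ)
    (v : List A) : MeasurableSet {x : ℤ → A | occursAt x t v} := by
  have h : {x : ℤ → A | occursAt x t v} =
      ⋂ i ∈ Finset.range v.length, {x | x (t - i) = v.reverse.getD i default} := by
    ext x; simp [occursAt]
  rw [h]
  exact Finset.measurableSet_biInter _ fun i _ =>
    measurableSet_singleton _ |>.preimage (measurable_pi_apply _)

end Words

lemma pastWord_succ {A : Type} (x : ℤ → A) (t : ℤ) (k : ℕ) :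
    pastWord x t (k + 1) = x (t - k) :: pastWord x t k := by
  simp [pastWord, List.range_succ]

section Shift

variable {A : Type} [MeasurableSpace A]

lemma measurable_shiftA : Measurable (shiftA (A := A)) :=
  measurable_pi_lambda _ fun _ => measurable_pi_apply _

variable [MeasurableSingletonClass A]

lemma measurableSet_apply_eq (t : ℤ) (a : A) : MeasurableSet {ω : ℤ → A | ω t = a} :=
  measurableSet_singleton a |>.preimage (measurable_pi_apply t)

lemma Ergodic.ae_exists_apply_neg_eq {μ : Measure (ℤ → A)} [IsFiniteMeasure μ]
    (hμ : Ergodic shiftA μ) {a : A} (ha : 0 < μ {ω | ω 1 = a}) :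
    ∀ᵐ ω ∂μ, ∃ j : ℕ, ω (-j) = a := by
  set P := {ω : ℤ → A | ∃ j : ℕ, ω (-j) = a}
  have hP : MeasurableSet P := by
    simp only [P, Set.ofPred_exists]
    exact MeasurableSet.iUnion fun j => measurableSet_apply_eq _ a
  have hPshift : P ⊆ shiftA ⁻¹' P := fun ω ⟨j, hj⟩ => ⟨j + 1, by simpa [shiftA] using hj⟩
  have hone : {ω | ω 1 = a} ⊆ shiftA ⁻¹' P := fun ω hω => ⟨0, by simpa [shiftA] using hω⟩
  rcases hμ.ae_empty_or_univ_of_ae_le_preimage hP.nullMeasurableSet hPshift.eventuallyLE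
    with hnull | hfull
  · refine absurd (measure_mono_null hone ?_) ha.ne'
    rw [hμ.measure_preimage hP.nullMeasurableSet]
    exact ae_eq_empty.1 hnull
  · exact ae_iff.2 (ae_eq_univ.1 hfull)

end Shift

namespace IndicatorMarkov

section IndicatorCylinder

variable {S : Type} [DecidableEq S] (s₀ : S)

def indicatorSeq : (ℤ → S) → (ℤ → Bool) := fun ω n => decide (ω n = s₀)

/-- The event `{X_{t-|v|+1}^t = v}` for the indicator process `X = indicatorSeq s₀ ω`. -/
def indicatorCylinder (t : ℤ) (v : List Bool) : Set (ℤ → S) :=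
  {ω | occursAt (indicatorSeq s₀ ω) t v}

variable {s₀}

lemma indicatorCylinder_nil (t : ℤ) : indicatorCylinder s₀ t [] = Set.univ :=
  Set.eq_univ_of_forall fun _ => occursAt_nil _ t

lemma indicatorCylinder_append {t t' : ℤ} {v w : List Bool} (h : t' + w.length = t) :
    indicatorCylinder s₀ t (v ++ w) = indicatorCylinder s₀ t w ∩ indicatorCylinder s₀ t' v :=
  Set.ext fun _ => occursAt_append h

lemma indicatorCylinder_cons {t t' : ℤ} {a : Bool} {w : List Bool} (h : t' + w.length = t) :
    indicatorCylinder s₀ t (a :: w) =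
      indicatorCylinder s₀ t w ∩ {ω | ω t' ∈ {s | decide (s = s₀) = a}} := by
  rw [← List.singleton_append, indicatorCylinder_append h]
  ext ω; simp [indicatorCylinder, occursAt_singleton, indicatorSeq]

end IndicatorCylinder

variable {S : Type} [MeasurableSpace S]

abbrev pastMeasurableSpace (t : ℤ) : MeasurableSpace (ℤ → S) :=
  MeasurableSpace.comap (fun ω (i : ℕ) => ω (t - i)) inferInstance

lemma measurable_apply_past {t i : ℤ} (h : i ≤ t) :
    Measurable[pastMeasurableSpace t] (fun ω : ℤ → S => ω i) := by
  have hcomp : (fun ω : ℤ → S => ω i) =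
      (fun f : ℕ → S => f (t - i).toNat) ∘ (fun ω (j : ℕ) => ω (t - j)) := by
    ext ω; simp [Int.toNat_of_nonneg (sub_nonneg.2 h)]
  rw [hcomp]
  exact (measurable_pi_apply _).comp (comap_measurable _)

lemma comap_le_pastMeasurableSpace {t : ℤ} (f : ℕ → ℤ) (hf : ∀ i, f i ≤ t) :
    MeasurableSpace.comap (fun ω (i : ℕ) => ω (f i)) inferInstance ≤
      pastMeasurableSpace (S := S) t :=
  (@measurable_pi_lambda _ _ _ (pastMeasurableSpace t) _ _
    fun i => measurable_apply_past (hf i)).comap_le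

lemma pastMeasurableSpace_le (t : ℤ) :
    pastMeasurableSpace t ≤ (inferInstance : MeasurableSpace (ℤ → S)) :=
  (measurable_pi_lambda _ fun _ => measurable_pi_apply _).comap_le

lemma pastMeasurableSpace_mono {s t : ℤ} (h : s ≤ t) :
    pastMeasurableSpace (S := S) s ≤ pastMeasurableSpace t :=
  comap_le_pastMeasurableSpace _ fun _ => by omega

lemma measurable_shiftA_past (t : ℤ) :
    Measurable[pastMeasurableSpace (t + 1), pastMeasurableSpace t] (shiftA (A := S)) := by
  rw [measurable_iff_comap_le, pastMeasurableSpace, MeasurableSpace.comap_comp]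
  exact comap_le_pastMeasurableSpace (fun i => t - i + 1) fun _ => by omega

lemma pastMeasurableSpace_zero : pastMeasurableSpace (S := S) 0 =
    MeasurableSpace.comap (fun ω : ℤ → S => fun i : ℕ => ω (-(i : ℤ))) inferInstance := by
  simp only [pastMeasurableSpace, zero_sub]

variable (μ : Measure (ℤ → S))

/-- Given the past up to time `t`, the conditional probability of `E` is `h (ω t)`. It is encoded
without conditional expectations, by testing against past events on which `ω t` is constant. -/
def MarkovAt (t : ℤ) (E : Set (ℤ → S)) : Prop :=
  ∃ h : S → ℝ≥0∞, ∀ u B, MeasurableSet[pastMeasurableSpace t] B → B ⊆ {ω | ω t = u} →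
    μ (E ∩ B) = h u * μ B

variable {μ}

lemma markovAt_univ (t : ℤ) : MarkovAt μ t Set.univ :=
  ⟨fun _ => 1, fun _ B _ _ => by rw [Set.univ_inter, one_mul]⟩

lemma MarkovAt.of_preimage_shiftA (hμ : MeasurePreserving shiftA μ μ) {t : ℤ}
    {E : Set (ℤ → S)} (hE : MeasurableSet E) (hshift : MarkovAt μ (t + 1) (shiftA ⁻¹' E)) :
    MarkovAt μ t E := by
  obtain ⟨h, hh⟩ := hshift
  refine ⟨h, fun u B hB hBu => ?_⟩
  have hBm : MeasurableSet B := pastMeasurableSpace_le t B hB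
  calc μ (E ∩ B) = μ (shiftA ⁻¹' E ∩ shiftA ⁻¹' B) :=
        (hμ.measure_preimage (hE.inter hBm).nullMeasurableSet).symm
    _ = h u * μ (shiftA ⁻¹' B) :=
        hh u _ (measurable_shiftA_past t hB) fun ω hω => by simpa [shiftA] using hBu hω
    _ = h u * μ B := by rw [hμ.measure_preimage hBm.nullMeasurableSet]

section Countable

variable [Countable S] [MeasurableSingletonClass S]

lemma measure_eq_tsum_inter_apply_eq (t : ℤ) {V : Set (ℤ → S)} (hV : MeasurableSet V) :
    μ V = ∑' u, μ (V ∩ {ω | ω t = u}) := by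
  have hdisj : Pairwise (Function.onFun Disjoint fun u : S => V ∩ {ω | ω t = u}) :=
    fun u v huv => (pairwise_disjoint_fiber (fun ω : ℤ → S => ω t) huv).mono
      Set.inter_subset_right Set.inter_subset_right
  rw [← measure_iUnion hdisj fun u => hV.inter (measurableSet_apply_eq t u)]
  congr; ext ω; simp

/-- Chapman–Kolmogorov: splitting a past event according to `ω t` reduces the step from `t` to
`t - 1` to the one-step transition probabilities `q u v`. -/
lemma MarkovAt.inter_apply_mem {t : ℤ} {E : Set (ℤ → S)} (hE : MeasurableSet E)
    (hEt : MarkovAt μ t E) (hstep : ∀ u, MarkovAt μ (t - 1) {ω | ω t = u}) (D : Set S) :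
    MarkovAt μ (t - 1) (E ∩ {ω | ω t ∈ D}) := by
  obtain ⟨h, hh⟩ := hEt
  choose q hq using hstep
  refine ⟨fun v => ∑' u, D.indicator h u * q u v, fun v B hB hBv => ?_⟩
  have hBt : MeasurableSet[pastMeasurableSpace t] B := pastMeasurableSpace_mono (by omega) B hB
  have hBm : MeasurableSet B := pastMeasurableSpace_le _ B hB
  have hD : MeasurableSet {ω : ℤ → S | ω t ∈ D} :=
    measurable_pi_apply t (Set.to_countable D).measurableSet
  have hpiece : ∀ u, μ (E ∩ {ω | ω t ∈ D} ∩ B ∩ {ω | ω t = u}) =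
      D.indicator h u * (q u v * μ B) := by
    intro u
    by_cases hu : u ∈ D
    · have hset : E ∩ {ω | ω t ∈ D} ∩ B ∩ {ω | ω t = u} = E ∩ (B ∩ {ω | ω t = u}) := by
        ext ω; simp only [Set.mem_inter_iff, Set.mem_ofPred_eq]
        constructor
        · rintro ⟨⟨⟨hE, -⟩, hB⟩, hu⟩; exact ⟨hE, hB, hu⟩
        · rintro ⟨hE, hB, rfl⟩; exact ⟨⟨⟨hE, hu⟩, hB⟩, rfl⟩
      rw [hset, hh u (B ∩ {ω | ω t = u})
        (hBt.inter (measurable_apply_past le_rfl (measurableSet_singleton u)))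
        Set.inter_subset_right, Set.inter_comm, hq u v B hB hBv, Set.indicator_of_mem hu]
    · have hset : E ∩ {ω | ω t ∈ D} ∩ B ∩ {ω | ω t = u} = ∅ := by
        ext ω
        simp only [Set.mem_inter_iff, Set.mem_ofPred_eq, Set.mem_empty_iff_false, iff_false]
        rintro ⟨⟨⟨-, hD⟩, -⟩, rfl⟩; exact hu hD
      rw [hset, measure_empty, Set.indicator_of_notMem hu, zero_mul]
  rw [measure_eq_tsum_inter_apply_eq t ((hE.inter hD).inter hBm), ENNReal.tsum_mul_right.symm]
  exact tsum_congr fun u => by rw [hpiece, mul_assoc]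

end Countable

section Chain

variable [DecidableEq S] [MeasurableSingletonClass S] [IsFiniteMeasure μ]

lemma markovAt_zero_apply_one {s : S}
    (hs : μ[(fun ω => if ω 1 = s then (1 : ℝ) else 0) |
          MeasurableSpace.comap (fun ω : ℤ → S => fun i : ℕ => ω (-(i : ℤ))) inferInstance]
        =ᵐ[μ]
      μ[(fun ω => if ω 1 = s then (1 : ℝ) else 0) |
          MeasurableSpace.comap (fun ω : ℤ → S => ω 0) inferInstance]) :
    MarkovAt μ 0 {ω | ω 1 = s} := by
  set g := μ[(fun ω => if ω 1 = s then (1 : ℝ) else 0) |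
    MeasurableSpace.comap (fun ω : ℤ → S => ω 0) inferInstance]
  have hg : g.FactorsThrough (fun ω => ω 0) := stronglyMeasurable_condExp.factorsThrough
  have hf : (fun ω : ℤ → S => if ω 1 = s then (1 : ℝ) else 0) = {ω | ω 1 = s}.indicator 1 := by
    ext ω; simp [Set.indicator_apply]
  have hle := pastMeasurableSpace_le (S := S) 0
  rw [pastMeasurableSpace_zero] at hle
  refine ⟨fun u => ENNReal.ofReal (g fun _ => u), fun u B hB hBu => ?_⟩
  have hBm : MeasurableSet B := pastMeasurableSpace_le 0 B hB
  rw [pastMeasurableSpace_zero] at hB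
  have hfint : Integrable (fun ω : ℤ → S => if ω 1 = s then (1 : ℝ) else 0) μ :=
    hf ▸ (integrable_const 1).indicator (measurableSet_apply_eq 1 s)
  have hint : ∫ ω in B, g ω ∂μ = μ.real ({ω | ω 1 = s} ∩ B) := by
    rw [← integral_congr_ae (ae_restrict_of_ae hs), setIntegral_condExp hle hfint hB, hf,
      integral_indicator_one (measurableSet_apply_eq 1 s),
      measureReal_restrict_apply (measurableSet_apply_eq 1 s)]
  have hconst : ∫ ω in B, g ω ∂μ = g (fun _ => u) * μ.real B := by
    rw [setIntegral_congr_fun hBm fun ω hω => hg (a := ω) (b := fun _ => u) (hBu hω),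
      setIntegral_const, smul_eq_mul, mul_comm]
  rw [← ofReal_measureReal, ← hint, hconst, ENNReal.ofReal_mul' measureReal_nonneg,
    ofReal_measureReal]

lemma markovAt_apply_eq (hμ : MeasurePreserving shiftA μ μ)
    (hMarkov : ∀ s : S,
      μ[(fun ω => if ω 1 = s then (1 : ℝ) else 0) |
          MeasurableSpace.comap (fun ω : ℤ → S => fun i : ℕ => ω (-(i : ℤ))) inferInstance]
        =ᵐ[μ]
      μ[(fun ω => if ω 1 = s then (1 : ℝ) else 0) |
          MeasurableSpace.comap (fun ω : ℤ → S => ω 0) inferInstance])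
    (t : ℤ) (ht : t ≤ 1) (u : S) : MarkovAt μ (t - 1) {ω | ω t = u} := by
  induction t, ht using Int.leInductionDown generalizing u with
  | base => exact markovAt_zero_apply_one (hMarkov u)
  | pred n _ ih =>
    refine MarkovAt.of_preimage_shiftA hμ (measurableSet_apply_eq _ _) ?_
    have hpre : shiftA ⁻¹' {ω : ℤ → S | ω (n - 1) = u} = {ω | ω n = u} := by
      ext ω; simp [shiftA]
    rw [hpre, sub_add_cancel]
    exact ih u

end Chain

section Indicator

variable [DecidableEq S] {s₀ : S} [Countable S] [MeasurableSingletonClass S]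

variable (s₀) in
lemma measurable_indicatorSeq : Measurable (indicatorSeq s₀) :=
  measurable_pi_lambda _ fun n =>
    (measurable_of_countable fun s : S => decide (s = s₀)).comp (measurable_pi_apply n)

lemma measurableSet_indicatorCylinder {t t' : ℤ} (h : t' ≤ t) (v : List Bool) :
    MeasurableSet[pastMeasurableSpace t] (indicatorCylinder s₀ t' v) := by
  induction v generalizing t' with
  | nil => rw [indicatorCylinder_nil]; exact MeasurableSet.univ
  | cons a w ih =>
    rw [indicatorCylinder_cons (t' := t' - w.length) (by ring)]
    exact (ih h).inter (measurable_apply_past (by omega) (Set.to_countable _).measurableSet)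

lemma markovAt_indicatorCylinder
    (hmarkov : ∀ t ≤ 1, ∀ u : S, MarkovAt μ (t - 1) {ω | ω t = u})
    {t t' : ℤ} (ht : t ≤ 1) (v : List Bool) (h : t' + v.length = t) :
    MarkovAt μ t' (indicatorCylinder s₀ t v) := by
  induction v generalizing t' with
  | nil =>
    rw [indicatorCylinder_nil]
    exact markovAt_univ t'
  | cons a w ih =>
    rw [indicatorCylinder_cons (t' := t' + 1) (by simp at h ⊢; omega)]
    have := (ih (t' := t' + 1) (by simp at h ⊢; omega)).inter_apply_mem
      (measurableSet_indicatorCylinder le_rfl w |> pastMeasurableSpace_le _ _)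
      (hmarkov (t' + 1) (by simp at h; omega)) {s | decide (s = s₀) = a}
    rwa [add_sub_cancel_right] at this

lemma measureReal_indicatorCylinder_add_one (hμ : MeasurePreserving shiftA μ μ) (t : ℤ)
    (v : List Bool) :
    μ.real (indicatorCylinder s₀ (t + 1) v) = μ.real (indicatorCylinder s₀ t v) := by
  rw [← hμ.measureReal_preimage (s := indicatorCylinder s₀ t v)
    (measurableSet_indicatorCylinder le_rfl v |> pastMeasurableSpace_le _ _).nullMeasurableSet]
  exact congrArg μ.real (Set.ext fun ω => (occursAt_shiftA (x := indicatorSeq s₀ ω)).symm)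

lemma wordProb_map_indicatorSeq (v : List Bool) :
    wordProb (μ.map (indicatorSeq s₀)) v = μ.real (indicatorCylinder s₀ 0 v) := by
  rw [wordProb, Measure.map_apply (measurable_indicatorSeq s₀) (measurableSet_occursAt 0 v)]
  rfl

/-- The `1` at time `-m` pins the chain to `s₀`, so the numerator and the denominator of
`condProb` both factor through the probability of the prefix event `B v` ending there. -/
theorem isMemoryWord_true_cons [IsFiniteMeasure μ] (hμ : MeasurePreserving shiftA μ μ)
    (hmarkov : ∀ t ≤ 1, ∀ u : S, MarkovAt μ (t - 1) {ω | ω t = u}) (w : List Bool) :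
    IsMemoryWord (μ.map (indicatorSeq s₀)) (true :: w) := by
  set m : ℤ := (w.length : ℤ)
  set B : List Bool → Set (ℤ → S) := fun v => indicatorCylinder s₀ (-m) (v ++ [true])
  have hsplit : ∀ v, B v = indicatorCylinder s₀ (-m) [true] ∩ indicatorCylinder s₀ (-m - 1) v :=
    fun v => indicatorCylinder_append (by simp)
  have hB : ∀ v, MeasurableSet[pastMeasurableSpace (-m)] (B v) :=
    fun v => measurableSet_indicatorCylinder le_rfl _
  have hBs₀ : ∀ v, B v ⊆ {ω | ω (-m) = s₀} := by
    intro v ω hω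
    rw [hsplit] at hω
    simpa [indicatorCylinder, occursAt_singleton, indicatorSeq] using hω.1
  obtain ⟨h, hh⟩ := markovAt_indicatorCylinder (s₀ := s₀) hmarkov (t' := -m) zero_le_one w
    (by simp [m])
  have hden : ∀ v, wordProb (μ.map (indicatorSeq s₀)) (v ++ true :: w) =
      (h s₀ * μ (B v)).toReal := by
    intro v
    rw [wordProb_map_indicatorSeq, List.append_cons,
      indicatorCylinder_append (t' := -m) (by simp [m]), measureReal_def,
      hh s₀ _ (hB v) (hBs₀ v)]
  intro z y _ hpos
  obtain ⟨hy, hhy⟩ := markovAt_indicatorCylinder (s₀ := s₀) hmarkov (t' := -m) le_rfl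
    (w ++ [y]) (by simp [m])
  have hnum : ∀ v, wordProb (μ.map (indicatorSeq s₀)) (v ++ true :: w ++ [y]) =
      (hy s₀ * μ (B v)).toReal := by
    intro v
    rw [wordProb_map_indicatorSeq, ← measureReal_indicatorCylinder_add_one hμ 0, zero_add,
      show v ++ true :: w ++ [y] = (v ++ [true]) ++ (w ++ [y]) by simp,
      indicatorCylinder_append (t' := -m) (by simp [m]), measureReal_def,
      hhy s₀ _ (hB v) (hBs₀ v)]
  have hcond : ∀ v, μ (B v) ≠ 0 →
      condProb (μ.map (indicatorSeq s₀)) y (v ++ true :: w) = (hy s₀).toReal / (h s₀).toReal := by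
    intro v hv
    rw [condProb, hnum, hden, ENNReal.toReal_mul, ENNReal.toReal_mul,
      mul_div_mul_right _ _ (ENNReal.toReal_ne_zero.2 ⟨hv, measure_ne_top _ _⟩)]
  have hz : μ (B z) ≠ 0 := by
    intro h0
    rw [hnum, h0, mul_zero] at hpos
    simp at hpos
  have hnil : μ (B []) ≠ 0 := fun h0 =>
    hz (measure_mono_null ((hsplit z).trans_subset Set.inter_subset_left) h0)
  exact (hcond [] hnil).trans (hcond z hz).symm

end Indicator

end IndicatorMarkov

open IndicatorMarkov in
theorem stmt5_general {S : Type} [Countable S] [DecidableEq S]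
    [MeasurableSpace S] [MeasurableSingletonClass S]
    (μ : Measure (ℤ → S)) [IsProbabilityMeasure μ]
    (hstat : MeasurePreserving (shiftA (A := S)) μ μ) (herg : Ergodic (shiftA (A := S)) μ)
    (hMarkov : ∀ s : S,
      μ[(fun ω => if ω 1 = s then (1 : ℝ) else 0) |
          MeasurableSpace.comap (fun ω : ℤ → S => fun i : ℕ => ω (-(i : ℤ))) inferInstance]
        =ᵐ[μ]
      μ[(fun ω => if ω 1 = s then (1 : ℝ) else 0) |
          MeasurableSpace.comap (fun ω : ℤ → S => ω 0) inferInstance])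
    (s₀ : S) (hpos : 0 < μ {ω | ω 1 = s₀}) :
    MeasurePreserving (shiftA (A := Bool)) (μ.map (fun ω n => decide (ω n = s₀)))
        (μ.map (fun ω n => decide (ω n = s₀))) ∧
    Ergodic (shiftA (A := Bool)) (μ.map (fun ω n => decide (ω n = s₀))) ∧
    (∀ᵐ x ∂(μ.map (fun ω n => decide (ω n = s₀))),
      ∃ k : ℕ, IsMemoryWord (μ.map (fun ω n => decide (ω n = s₀))) (pastWord x 0 k)) := by
  have hX : Ergodic shiftA (μ.map (indicatorSeq s₀)) :=
    ((measurable_indicatorSeq s₀).measurePreserving μ).ergodic_of_ergodic_semiconj herg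
      measurable_shiftA fun _ => rfl
  have hone : 0 < μ.map (indicatorSeq s₀) {x | x 1 = true} := by
    rw [Measure.map_apply (measurable_indicatorSeq s₀) (measurableSet_apply_eq 1 true)]
    simpa [indicatorSeq] using hpos
  refine ⟨hX.toMeasurePreserving, hX, ?_⟩
  filter_upwards [hX.ae_exists_apply_neg_eq hone] with x ⟨j, hj⟩
  refine ⟨j + 1, ?_⟩
  rw [pastWord_succ, zero_sub, hj]
  exact isMemoryWord_true_cons hstat (markovAt_apply_eq hstat hMarkov) _

/-- an instantaneous indicator function `X_n = 1_{{M_n = s}}` of a stationary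
ergodic countable-state first-order Markov chain is a stationary, ergodic, finitarily
Markovian binary process. -/
theorem stmt5 {S : Type} [Countable S] [DecidableEq S] [Inhabited S]
    [MeasurableSpace S] [MeasurableSingletonClass S]
    (μ : Measure (ℤ → S)) [IsProbabilityMeasure μ]
    (hstat : MeasurePreserving (shiftA (A := S)) μ μ) (herg : Ergodic (shiftA (A := S)) μ)
    (hMarkov : ∀ s : S,
      μ[(fun ω => if ω 1 = s then (1 : ℝ) else 0) |
          MeasurableSpace.comap (fun ω : ℤ → S => fun i : ℕ => ω (-(i : ℤ))) inferInstance]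
        =ᵐ[μ]
      μ[(fun ω => if ω 1 = s then (1 : ℝ) else 0) |
          MeasurableSpace.comap (fun ω : ℤ → S => ω 0) inferInstance])
    (s₀ : S) (hpos : 0 < μ {ω | ω 1 = s₀}) :
    MeasurePreserving (shiftA (A := Bool)) (μ.map (fun ω n => decide (ω n = s₀)))
        (μ.map (fun ω n => decide (ω n = s₀))) ∧
    Ergodic (shiftA (A := Bool)) (μ.map (fun ω n => decide (ω n = s₀))) ∧
    (∀ᵐ x ∂(μ.map (fun ω n => decide (ω n = s₀))),
      ∃ k : ℕ, IsMemoryWord (μ.map (fun ω n => decide (ω n = s₀))) (pastWord x 0 k)) :=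
  stmt5_general μ hstat herg hMarkov s₀ hpos

end
end
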